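/- Let K be a field, O a subring of K, and 1 ≤ m ≤ n. Then the set of 2m×n block matrices [[X₁,X₂],[X₃,X₄]] with X₁ ∈ Bₘ(O) (upper-triangular over O with diagonal entries in Oˣ), X₂ ∈ M_{m,n−m}(O), X₃ ∈ M_{m,m}(O), X₄ ∈ M_{m,n−m}(O) is equal to the set of products [[1ₘ,0],[Z₃,Z₄]]·b where Z₃ ∈ M_{m,m}(O), Z₄ ∈ M_{m,n−m}(O), and b ∈ Bₙ(O) (upper-triangular n×n over O with diagonal entries in Oˣ). -/

import Mathlib

open Matrix

/-- Every entry of the matrix lies in the subring `O`. -/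
def MemO {K : Type*} [Field K] {α β : Type*} (O : Subring K) (M : Matrix α β K) : Prop :=
  ∀ i j, M i j ∈ O

/-- Position of an index of `Fin m ⊕ Fin r` in the concatenated ordering. -/
def idx (m : ℕ) {r : ℕ} : Fin m ⊕ Fin r → ℕ :=
  Sum.elim (fun i => (i : ℕ)) (fun j => m + (j : ℕ))

/-- `Bₘ(O)`: upper-triangular matrices with entries in `O` and diagonal entries units of `O`. -/
def Bpos {K : Type*} [Field K] (O : Subring K) (m : ℕ) : Set (Matrix (Fin m) (Fin m) K) :=
  {M | MemO O M ∧ (∀ i j : Fin m, (j : ℕ) < (i : ℕ) → M i j = 0) ∧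
    ∀ i, ∃ c ∈ O, M i i * c = 1}

/-- `Bₙ(O)` on the index type `Fin m ⊕ Fin r` with its concatenated ordering:
upper-triangular matrices with entries in `O` and diagonal entries units of `O`. -/
def BO {K : Type*} [Field K] (O : Subring K) (m r : ℕ) :
    Set (Matrix (Fin m ⊕ Fin r) (Fin m ⊕ Fin r) K) :=
  {b | MemO O b ∧ (∀ p q, idx m q < idx m p → b p q = 0) ∧
    ∀ p, ∃ c ∈ O, b p p * c = 1}

section Aux

variable {K : Type*} [Field K] (O : Subring K)

lemma memO_mul {α β γ : Type*} [Fintype β] {A : Matrix α β K} {B : Matrix β γ K}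
    (hA : MemO O A) (hB : MemO O B) : MemO O (A * B) := fun i j => by
  rw [Matrix.mul_apply]
  exact Subring.sum_mem _ fun k _ => O.mul_mem (hA i k) (hB k j)

lemma memO_add {α β : Type*} {A B : Matrix α β K} (hA : MemO O A) (hB : MemO O B) :
    MemO O (A + B) := fun i j => O.add_mem (hA i j) (hB i j)

lemma memO_sub {α β : Type*} {A B : Matrix α β K} (hA : MemO O A) (hB : MemO O B) :
    MemO O (A - B) := fun i j => O.sub_mem (hA i j) (hB i j)

lemma memO_one {α : Type*} [DecidableEq α] : MemO O (1 : Matrix α α K) := fun i j => by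
  by_cases h : i = j
  · subst h; simpa using O.one_mem
  · simpa [Matrix.one_apply_ne h] using O.zero_mem

lemma memO_zero {α β : Type*} : MemO O (0 : Matrix α β K) := fun i j => O.zero_mem

/-- key lemma: a matrix in `Bpos O m` has a two-sided inverse with entries in `O`. -/
lemma exists_inv_memO {m : ℕ} {X : Matrix (Fin m) (Fin m) K} (hX : X ∈ Bpos O m) :
    ∃ B : Matrix (Fin m) (Fin m) K, MemO O B ∧ X * B = 1 ∧ B * X = 1 := by
  obtain ⟨hmem, htri, hunit⟩ := hX
  -- lift `X` to a matrix over `O`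
  set A : Matrix (Fin m) (Fin m) O := fun i j => ⟨X i j, hmem i j⟩ with hA
  have hdet : IsUnit A.det := by
    have hAtri : A.BlockTriangular id := by
      intro i j hij
      exact Subtype.ext (htri i j hij)
    rw [Matrix.det_of_upperTriangular hAtri]
    refine Finset.prod_induction _ IsUnit (fun a b ha hb => ha.mul hb) isUnit_one
      fun i _ => ?_
    obtain ⟨c, hc, hc1⟩ := hunit i
    exact IsUnit.of_mul_eq_one ⟨c, hc⟩ (Subtype.ext hc1)
  have hAu : IsUnit A := (Matrix.isUnit_iff_isUnit_det A).mpr hdet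
  obtain ⟨u, hu⟩ := hAu
  set B : Matrix (Fin m) (Fin m) O := ((u⁻¹ : (Matrix (Fin m) (Fin m) O)ˣ) : Matrix (Fin m) (Fin m) O) with hBdef
  have hmapX : A.map (O.subtype : O →+* K) = X := by ext i j; rfl
  have h1 : A * B = 1 := by rw [hBdef, ← hu]; exact u.mul_inv
  have h2 : B * A = 1 := by rw [hBdef, ← hu]; exact u.inv_mul
  refine ⟨B.map (O.subtype : O →+* K), fun i j => by simp [Matrix.map_apply], ?_, ?_⟩
  · have := congrArg (Matrix.map · (O.subtype : O →+* K)) h1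
    rw [Matrix.map_mul, Matrix.map_one (O.subtype) (map_zero _) (map_one _), hmapX] at this
    exact this
  · have := congrArg (Matrix.map · (O.subtype : O →+* K)) h2
    rw [Matrix.map_mul, Matrix.map_one (O.subtype) (map_zero _) (map_one _), hmapX] at this
    exact this

end Aux

/-- The factorization `[B(O) M(O); M(O) M(O)] = [1 0; M(O) M(O)]·B_{GLₙ}(O)` from the
computation of `supp φ_{H,t}` in the proof of Theorem 2.5. -/
theorem factorization_step {K : Type*} [Field K] (O : Subring K)
    (m n : ℕ) (hm : 1 ≤ m) (hmn : m ≤ n) :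
    {X : Matrix (Fin m ⊕ Fin m) (Fin m ⊕ Fin (n - m)) K |
        ∃ (X₁ : Matrix (Fin m) (Fin m) K) (X₂ : Matrix (Fin m) (Fin (n - m)) K)
          (X₃ : Matrix (Fin m) (Fin m) K) (X₄ : Matrix (Fin m) (Fin (n - m)) K),
          X₁ ∈ Bpos O m ∧ MemO O X₂ ∧ MemO O X₃ ∧ MemO O X₄ ∧
          X = Matrix.fromBlocks X₁ X₂ X₃ X₄} =
      {X | ∃ (Z₃ : Matrix (Fin m) (Fin m) K) (Z₄ : Matrix (Fin m) (Fin (n - m)) K),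
        ∃ b ∈ BO O m (n - m), MemO O Z₃ ∧ MemO O Z₄ ∧
          X = Matrix.fromBlocks 1 0 Z₃ Z₄ * b} := by
  ext X
  simp only [Set.mem_setOf_eq]
  constructor
  · rintro ⟨X₁, X₂, X₃, X₄, hX₁, hX₂, hX₃, hX₄, rfl⟩
    obtain ⟨B, hB, hXB, hBX⟩ := exists_inv_memO O hX₁
    obtain ⟨h1mem, h1tri, h1unit⟩ := hX₁
    refine ⟨X₃ * B, X₄ - X₃ * B * X₂, Matrix.fromBlocks X₁ X₂ 0 1, ⟨?_, ?_, ?_⟩,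
      memO_mul O hX₃ hB, memO_sub O hX₄ (memO_mul O (memO_mul O hX₃ hB) hX₂), ?_⟩
    · rintro (i | i) (j | j)
      · exact h1mem i j
      · exact hX₂ i j
      · exact O.zero_mem
      · exact memO_one O i j
    · rintro (p | p) (q | q) h
      · exact h1tri p q h
      · exact absurd h (by simp [idx]; omega)
      · rfl
      · have : (q : ℕ) < (p : ℕ) := by simpa [idx] using h
        exact Matrix.one_apply_ne (by rintro rfl; omega)
    · rintro (p | p)
      · exact h1unit p
      · exact ⟨1, O.one_mem, by simp⟩
    · have h3 : X₃ * B * X₁ = X₃ := by rw [Matrix.mul_assoc, hBX, Matrix.mul_one]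
      rw [Matrix.fromBlocks_multiply]
      simp [h3]
  · rintro ⟨Z₃, Z₄, b, ⟨hbmem, hbtri, hbunit⟩, hZ₃, hZ₄, rfl⟩
    have hb : b = Matrix.fromBlocks b.toBlocks₁₁ b.toBlocks₁₂ 0 b.toBlocks₂₂ := by
      ext (i | i) (j | j)
      · rfl
      · rfl
      · exact hbtri (Sum.inr i) (Sum.inl j) (by simp [idx]; omega)
      · rfl
    have hb11 : b.toBlocks₁₁ ∈ Bpos O m := by
      refine ⟨fun i j => hbmem _ _, fun i j h => hbtri (Sum.inl i) (Sum.inl j) h,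
        fun i => hbunit (Sum.inl i)⟩
    refine ⟨b.toBlocks₁₁, b.toBlocks₁₂, Z₃ * b.toBlocks₁₁,
      Z₃ * b.toBlocks₁₂ + Z₄ * b.toBlocks₂₂, hb11,
      fun i j => hbmem _ _, memO_mul O hZ₃ fun i j => hbmem _ _,
      memO_add O (memO_mul O hZ₃ fun i j => hbmem _ _)
        (memO_mul O hZ₄ fun i j => hbmem _ _), ?_⟩
    conv_lhs => rw [hb]
    rw [Matrix.fromBlocks_multiply]
    simp
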